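/- For every integer k ≥ 1, the coefficient ε_k is an integer. -/

import Mathlib

/-- The rational numbers `σ_m^{(k)}`: `σ_m^{(1)} = (-1)^m/4` and, for `k ≥ 2`,
`σ_m^{(k)} = Σ_{i=0}^m Σ_{j=0}^i Σ_{n=1}^{k-1} (-k)^{m-i} σ_j^{(n)} σ_{i-j}^{(k-n)}`.
`sigmaC k m` is `σ_m^{(k)}` (junk value `0` for `k = 0`). -/
noncomputable def sigmaC : ℕ → ℕ → ℚ := fun k =>
  Nat.strongRecOn k (fun k ih =>
    if k = 0 then fun _ => 0
    else if k = 1 then fun m => (-1 : ℚ) ^ m / 4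
    else fun m =>
      let s : ℕ → ℕ → ℚ := fun n j => if h : n < k then ih n h j else 0
      ∑ i ∈ Finset.range (m + 1), ∑ j ∈ Finset.range (i + 1),
        ∑ n ∈ Finset.Icc 1 (k - 1), (-(k : ℚ)) ^ (m - i) * s n j * s (k - n) (i - j))

/-- The ordinary potential polynomial `A_{μ,m}(x_1,…,x_m)`: the coefficient of `z^m`
in the formal power series `(1 + Σ_{n≥1} x_n z^n)^μ`. -/
noncomputable def potA (x : ℕ → ℚ) (μ m : ℕ) : ℚ :=
  PowerSeries.coeff m ((1 + PowerSeries.mk (fun n => if n = 0 then 0 else x n)) ^ μ)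

/-- The coefficients `ε_k`, defined recursively by
`ε_k = (-1)^{k+1} - Σ_{n=1}^{k-1} (-1)^{k-n} ε_n
      - Σ_{n=2}^{k+1} 4^n Σ_{m=0}^{k-n+1} σ_{k-n-m+1}^{(n)} A_{n,m}(ε_1,…,ε_m)`. -/
noncomputable def epsC : ℕ → ℚ := fun k =>
  Nat.strongRecOn k (fun k ih =>
    let e : ℕ → ℚ := fun i => if h : i < k then ih i h else 0
    (-1 : ℚ) ^ (k + 1) - ∑ n ∈ Finset.Icc 1 (k - 1), (-1 : ℚ) ^ (k - n) * e n
      - ∑ n ∈ Finset.Icc 2 (k + 1), (4 : ℚ) ^ n *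
          ∑ m ∈ Finset.range (k + 2 - n), sigmaC n (k + 1 - n - m) * potA e n m)

/-- The subring of rationals that are integers. -/
def intsR : Subring ℚ := (Int.castRingHom ℚ).range

lemma intCast_mem_intsR (z : ℤ) : (z : ℚ) ∈ intsR := ⟨z, rfl⟩

lemma natCast_mem_intsR (n : ℕ) : (n : ℚ) ∈ intsR := ⟨n, by simp⟩

lemma sigmaC_zero (m : ℕ) : sigmaC 0 m = 0 := by
  unfold sigmaC
  rw [Nat.strongRecOn_eq]
  simp

lemma sigmaC_one (m : ℕ) : sigmaC 1 m = (-1 : ℚ) ^ m / 4 := by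
  unfold sigmaC
  rw [Nat.strongRecOn_eq]
  simp

lemma sigmaC_eq (k m : ℕ) (hk : 2 ≤ k) :
    sigmaC k m = ∑ i ∈ Finset.range (m + 1), ∑ j ∈ Finset.range (i + 1),
        ∑ n ∈ Finset.Icc 1 (k - 1),
          (-(k : ℚ)) ^ (m - i) * sigmaC n j * sigmaC (k - n) (i - j) := by
  unfold sigmaC
  rw [Nat.strongRecOn_eq]
  have h0 : k ≠ 0 := by omega
  have h1 : k ≠ 1 := by omega
  simp only [h0, h1, if_false]
  refine Finset.sum_congr rfl fun i _ => Finset.sum_congr rfl fun j _ =>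
    Finset.sum_congr rfl fun n hn => ?_
  rw [Finset.mem_Icc] at hn
  have hnk : n < k := by omega
  have hkn : k - n < k := by omega
  simp only [dif_pos hnk, dif_pos hkn]

lemma four_pow_sigmaC_mem (k : ℕ) : ∀ m, (4 : ℚ) ^ k * sigmaC k m ∈ intsR := by
  induction k using Nat.strong_induction_on with
  | _ k ih =>
    intro m
    match k, ih with
    | 0, _ => simp [sigmaC_zero]
    | 1, _ =>
      rw [sigmaC_one]
      have : (4 : ℚ) ^ 1 * ((-1 : ℚ) ^ m / 4) = ((-1 : ℤ) ^ m : ℤ) := by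
        push_cast; ring
      rw [this]; exact intCast_mem_intsR _
    | (n + 2), ih =>
      set k := n + 2 with hk
      rw [sigmaC_eq k m (by omega), Finset.mul_sum]
      refine Subring.sum_mem _ fun i _ => ?_
      rw [Finset.mul_sum]
      refine Subring.sum_mem _ fun j _ => ?_
      rw [Finset.mul_sum]
      refine Subring.sum_mem _ fun p hp => ?_
      rw [Finset.mem_Icc] at hp
      have hpk : p < k := by omega
      have hkp : k - p < k := by omega
      have hsplit : (4 : ℚ) ^ k = 4 ^ p * 4 ^ (k - p) := by
        rw [← pow_add]; congr 1; omega
      have : (4 : ℚ) ^ k * ((-(k : ℚ)) ^ (m - i) * sigmaC p j * sigmaC (k - p) (i - j))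
          = (-(k : ℚ)) ^ (m - i) * ((4 : ℚ) ^ p * sigmaC p j) *
            ((4 : ℚ) ^ (k - p) * sigmaC (k - p) (i - j)) := by
        rw [hsplit]; ring
      rw [this]
      refine Subring.mul_mem _ (Subring.mul_mem _ ?_ (ih p hpk j)) (ih (k - p) hkp (i - j))
      refine Subring.pow_mem _ (Subring.neg_mem _ (natCast_mem_intsR k)) _

lemma coeff_mul_mem (φ ψ : PowerSeries ℚ) (hφ : ∀ n, PowerSeries.coeff n φ ∈ intsR)
    (hψ : ∀ n, PowerSeries.coeff n ψ ∈ intsR) (n : ℕ) :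
    PowerSeries.coeff n (φ * ψ) ∈ intsR := by
  rw [PowerSeries.coeff_mul]
  exact Subring.sum_mem _ fun p _ => Subring.mul_mem _ (hφ _) (hψ _)

lemma potA_mem (x : ℕ → ℚ) (hx : ∀ n, x n ∈ intsR) (μ m : ℕ) : potA x μ m ∈ intsR := by
  unfold potA
  induction μ generalizing m with
  | zero =>
    rw [pow_zero, PowerSeries.coeff_one]
    split <;> [exact Subring.one_mem _; exact Subring.zero_mem _]
  | succ μ ihμ =>
    rw [pow_succ]
    refine coeff_mul_mem _ _ ihμ (fun n => ?_) m
    rw [map_add, PowerSeries.coeff_one, PowerSeries.coeff_mk]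
    refine Subring.add_mem _ ?_ ?_
    · split <;> [exact Subring.one_mem _; exact Subring.zero_mem _]
    · split <;> [exact Subring.zero_mem _; exact hx _]

lemma epsC_eq (k : ℕ) :
    epsC k = (-1 : ℚ) ^ (k + 1)
      - ∑ n ∈ Finset.Icc 1 (k - 1), (-1 : ℚ) ^ (k - n) *
          (if n < k then epsC n else 0)
      - ∑ n ∈ Finset.Icc 2 (k + 1), (4 : ℚ) ^ n *
          ∑ m ∈ Finset.range (k + 2 - n), sigmaC n (k + 1 - n - m) *
            potA (fun i => if i < k then epsC i else 0) n m := by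
  unfold epsC
  rw [Nat.strongRecOn_eq]
  rfl

lemma epsC_mem (k : ℕ) : epsC k ∈ intsR := by
  induction k using Nat.strong_induction_on with
  | _ k ih =>
    rw [epsC_eq]
    have he : ∀ i, (if i < k then epsC i else 0) ∈ intsR := by
      intro i
      split
      · exact ih i ‹_›
      · exact Subring.zero_mem _
    refine Subring.sub_mem _ (Subring.sub_mem _ ?_ ?_) ?_
    · exact Subring.pow_mem _ (Subring.neg_mem _ (Subring.one_mem _)) _
    · exact Subring.sum_mem _ fun n _ => Subring.mul_mem _
        (Subring.pow_mem _ (Subring.neg_mem _ (Subring.one_mem _)) _) (he n)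
    · refine Subring.sum_mem _ fun n _ => ?_
      rw [Finset.mul_sum]
      refine Subring.sum_mem _ fun m _ => ?_
      have : (4 : ℚ) ^ n * (sigmaC n (k + 1 - n - m) *
          potA (fun i => if i < k then epsC i else 0) n m)
          = ((4 : ℚ) ^ n * sigmaC n (k + 1 - n - m)) *
            potA (fun i => if i < k then epsC i else 0) n m := by ring
      rw [this]
      exact Subring.mul_mem _ (four_pow_sigmaC_mem n _) (potA_mem _ he n m)

/-- For every `k ≥ 1`, the coefficient `ε_k` is an integer. -/
theorem epsC_isInt (k : ℕ) (hk : 1 ≤ k) : ∃ z : ℤ, epsC k = z := by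
  obtain ⟨z, hz⟩ := epsC_mem k
  exact ⟨z, hz.symm⟩
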